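/- Fix a ∈ (0, π/3) and a function q : ℝ → ℂ, square-integrable on (0, π), with q(x) = 0 for all x outside (a, π) and q(x) = 0 for almost every x ∈ (3a, π). Fix ρ ∈ ℂ, ρ ≠ 0, λ = ρ². Let ω = ∫_a^π q(t) dt. For ν ∈ {0,1} define Q_ν(x) = (∫_{x+a/2}^{3a} q(t) dt)(∫_a^{x−a/2} q(τ) dτ) − (−1)^ν ∫_a^{7a/2−x} q(t) (∫_{x+t−a/2}^{3a} q(τ) dτ) dt for x ∈ (3a/2, 5a/2), and set w_ν(x) = q(x) for x ∈ (a, 3a/2) ∪ (5a/2, 3a) and w_ν(x) = q(x) + Q_ν(x) for x ∈ (3a/2, 5a/2). Let y_{0,0}(x,λ) = cos(ρx), y_{1,0}(x,λ) = sin(ρx)/ρ, y_{μ,k}(x,λ) = ∫_a^x (sin ρ(x−t)/ρ) q(t) y_{μ,k−1}(t−a, λ) dt for k = 1, 2, and Y_μ(x,λ) = y_{μ,0}(x,λ) + y_{μ,1}(x,λ) + y_{μ,2}(x,λ) for μ ∈ {0,1}. Then for every ν ∈ {0,1} and j = 1 − ν, the quantity Δ_{ν,j}(λ), defined as the derivative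 at x = π of x ↦ Y_1(x,λ) when (ν,j) = (0,1) and as Y_0(π,λ) when (ν,j) = (1,0), satisfies Δ_{ν,j}(λ) = cos(ρπ) + ω sin(ρ(π−a))/(2ρ) + ((−1)^j/(2ρ)) ∫_a^{3a} w_ν(x) sin(ρ(π−2x+a)) dx. -/

import Mathlib

open MeasureTheory Set
open scoped Real

noncomputable def y0 (ρ : ℂ) (ν : ℕ) (x : ℝ) : ℂ :=
  if ν = 0 then Complex.cos (ρ * (x : ℂ)) else Complex.sin (ρ * (x : ℂ)) / ρ

noncomputable def ySeq (a : ℝ) (q : ℝ → ℂ) (ρ : ℂ) (ν : ℕ) : ℕ → ℝ → ℂ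
  | 0 => y0 ρ ν
  | k + 1 => fun x => ∫ t in a..x,
      (Complex.sin (ρ * ((x - t : ℝ) : ℂ)) / ρ) * q t * ySeq a q ρ ν k (t - a)
noncomputable def Yfun (a : ℝ) (q : ℝ → ℂ) (ρ : ℂ) (ν : ℕ) (x : ℝ) : ℂ :=
  ySeq a q ρ ν 0 x + ySeq a q ρ ν 1 x + ySeq a q ρ ν 2 x

noncomputable def Qfun (a : ℝ) (q : ℝ → ℂ) (ν : ℕ) (x : ℝ) : ℂ :=
  (∫ t in (x + a / 2)..(3 * a), q t) * (∫ τ in a..(x - a / 2), q τ)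
    - (-1) ^ ν * ∫ t in a..(7 * a / 2 - x), q t * (∫ τ in (x + t - a / 2)..(3 * a), q τ)

noncomputable def wfun (a : ℝ) (q : ℝ → ℂ) (ν : ℕ) (x : ℝ) : ℂ :=
  if x ∈ Set.Ioo (3 * a / 2) (5 * a / 2) then q x + Qfun a q ν x else q x

/-!
Only the restriction of `q` to `(a, 3a)` matters (a.e.), so we may assume `q` vanishes outside
`(a, 3a)`. Then `Y₁'(π)` and `Y₀(π)` both have the form
`cos ρπ + ∫ κ(t) q(t) y_{μ,0}(t - a) dt + ∫ κ(t) q(t) y_{μ,1}(t - a) dt`, with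
`κ(t) = cos ρ(π - t)` resp. `sin ρ(π - t) / ρ` (differentiating the Duhamel integral under the
integral sign). Product-to-sum formulas turn the first integral into the `ω`-term plus a multiple of
`∫ q(x) sin ρ(π - 2x + a) dx`. Inserting the integral for `y_{μ,1}` and applying Fubini, the second
integral becomes an integral of `q(t) q(s)` over the triangle `s < t - a` against a combination of
the two cosine kernels `kernelA`, `kernelB`.

On the other side, each term of `Q_ν(x)` is an integral of `q(t) q(s)` over a region depending
on `x`; integrating `sin ρ(π - 2x + a)` in `x` first (Fubini again) over the slices of these
regions produces the same two triangle integrals, divided by `2ρ`.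
-/

theorem MeasureTheory.Integrable.continuous_mul_of_support_subset {X R : Type*}
    [MeasurableSpace X] [TopologicalSpace X] [OpensMeasurableSpace X] [T2Space X] [NormedRing R]
    [SecondCountableTopologyEither X R] {μ : Measure X} {K : Set X} (hK : IsCompact K)
    {f g : X → R} (hf : Continuous f) (hg : Integrable g μ) (hsupp : Function.support g ⊆ K) :
    Integrable (fun x => f x * g x) μ :=
  (integrableOn_iff_integrable_of_support_subset
    ((Function.support_mul_subset_right f g).trans hsupp)).1
    (hg.integrableOn.continuousOn_mul hf.continuousOn hK)

theorem MeasureTheory.LocallyIntegrable.intervalIntegrable {E : Type*} [NormedAddCommGroup E]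
    {f : ℝ → E} (hf : LocallyIntegrable f) (u v : ℝ) : IntervalIntegrable f volume u v :=
  (hf.integrableOn_isCompact isCompact_uIcc).intervalIntegrable

section HalfLines

variable {E : Type*} [NormedAddCommGroup E] [NormedSpace ℝ E] {f : ℝ → E}

theorem intervalIntegral_eq_setIntegral_Iio {a : ℝ} (hf : ∀ t ≤ a, f t = 0) (x : ℝ) :
    ∫ t in a..x, f t = ∫ t in Iio x, f t := by
  rcases le_total a x with hax | hxa
  · rw [intervalIntegral.integral_of_le hax, integral_Ioc_eq_integral_Ioo,
      setIntegral_eq_of_subset_of_forall_sdiff_eq_zero measurableSet_Iio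
        Ioo_subset_Iio_self fun t ht => hf t (not_lt.1 fun h => ht.2 ⟨h, ht.1⟩)]
  · rw [intervalIntegral.integral_of_ge hxa,
      setIntegral_eq_zero_of_forall_eq_zero fun t ht => hf t ht.2,
      setIntegral_eq_zero_of_forall_eq_zero (t := Iio x) fun t ht => hf t (ht.out.le.trans hxa),
      neg_zero]

theorem intervalIntegral_eq_setIntegral_Ioi {b : ℝ} (hf : ∀ t ≥ b, f t = 0) (x : ℝ) :
    ∫ t in x..b, f t = ∫ t in Ioi x, f t := by
  rcases le_total x b with hxb | hbx
  · rw [intervalIntegral.integral_of_le hxb, integral_Ioc_eq_integral_Ioo,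
      setIntegral_eq_of_subset_of_forall_sdiff_eq_zero measurableSet_Ioi
        Ioo_subset_Ioi_self fun t ht => hf t (not_lt.1 fun h => ht.2 ⟨ht.1, h⟩)]
  · rw [intervalIntegral.integral_of_ge hbx,
      setIntegral_eq_zero_of_forall_eq_zero fun t ht => hf t ht.1.le,
      setIntegral_eq_zero_of_forall_eq_zero (t := Ioi x) fun t ht => hf t (hbx.trans ht.out.le),
      neg_zero]

theorem intervalIntegral_eq_integral_of_support_subset {a b x : ℝ}
    (hf : Function.support f ⊆ Ioo a b) (hbx : b ≤ x) :
    ∫ t in a..x, f t = ∫ t, f t := by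
  rw [intervalIntegral_eq_setIntegral_Iio
      (fun t ht => Function.support_subset_iff'.1 hf t fun h => (h.1.trans_le ht).false) x,
    setIntegral_eq_integral_of_forall_compl_eq_zero (s := Iio x)
      fun t ht => Function.support_subset_iff'.1 hf t fun h => ht (h.2.trans_le hbx)]

end HalfLines

theorem integral_indicator_one_mul_mul {α β : Type*} [MeasurableSpace β] {ν : Measure β}
    {f : α → ℂ} {g : β → ℂ} {R : Set (α × β)} (x : α) :
    (∫ y, R.indicator 1 (x, y) * g y ∂ν) * f x
      = ∫ y, R.indicator (fun z => f z.1 * g z.2) (x, y) ∂ν := by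
  rw [← integral_mul_const]
  congr 1 with y
  by_cases h : (x, y) ∈ R <;> simp [h, mul_comm]

section Fubini

variable {α β : Type*} [MeasurableSpace α] [MeasurableSpace β] {μ : Measure α} {ν : Measure β}
  {f : α → ℂ} {g : β → ℂ} {R : Set (α × β)}

theorem integrable_indicator_one_mul (hR : MeasurableSet R) (hg : Integrable g ν) (x : α) :
    Integrable (fun y => R.indicator 1 (x, y) * g y) ν := by
  have : (fun y => R.indicator 1 (x, y) * g y) = (Prod.mk x ⁻¹' R).indicator g := by
    ext y; by_cases h : (x, y) ∈ R <;> simp [h]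
  rw [this]
  exact hg.indicator (measurable_prodMk_left hR)

theorem integrable_integral_indicator_mul [SFinite ν] (hf : Integrable f μ) (hg : Integrable g ν)
    (hR : MeasurableSet R) :
    Integrable (fun x => (∫ y, R.indicator 1 (x, y) * g y ∂ν) * f x) μ := by
  rw [funext (integral_indicator_one_mul_mul (f := f) (g := g) (ν := ν) (R := R))]
  exact ((hf.mul_prod hg).indicator hR).integral_prod_left

theorem integral_integral_indicator_mul_swap [SFinite μ] [SFinite ν] (hf : Integrable f μ)
    (hg : Integrable g ν) (hR : MeasurableSet R) :
    ∫ x, (∫ y, R.indicator 1 (x, y) * g y ∂ν) * f x ∂μ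
      = ∫ y, (∫ x, R.indicator 1 (x, y) * f x ∂μ) * g y ∂ν := by
  rw [funext (integral_indicator_one_mul_mul (f := f) (g := g) (ν := ν) (R := R)),
    integral_integral_swap (f := fun x y => R.indicator (fun z => f z.1 * g z.2) (x, y))
      ((hf.mul_prod hg).indicator hR)]
  congr 1 with y
  rw [← integral_mul_const]
  congr 1 with x
  by_cases h : (x, y) ∈ R <;> simp [h, mul_comm]

end Fubini

theorem setIntegral_indicator_one_mul_of_slice {α β : Type*} [MeasurableSpace α] {μ : Measure α}
    {R : Set (α × β)} {I J : Set α} (hI : MeasurableSet I) (hJ : MeasurableSet J) (hJI : J ⊆ I)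
    {p : β} (hR : ∀ x ∈ I, (x, p) ∈ R ↔ x ∈ J) (h : α → ℂ) :
    ∫ x in I, R.indicator 1 (x, p) * h x ∂μ = ∫ x in J, h x ∂μ := by
  rw [setIntegral_congr_fun hI (g := J.indicator h) fun x hx => by
      by_cases hx' : x ∈ J <;> simp [hx', hR x hx],
    setIntegral_indicator hJ, inter_eq_right.2 hJI]

theorem Complex.sin_mul_cos (A B : ℂ) :
    sin A * cos B = (sin (A + B) + sin (A - B)) / 2 := by
  simp only [sin_add, sin_sub]; ring

theorem Complex.cos_mul_sin (A B : ℂ) :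
    cos A * sin B = (sin (A + B) - sin (A - B)) / 2 := by
  simp only [sin_add, sin_sub]; ring

theorem Complex.sin_mul_sin_mul_cos (A B C : ℂ) :
    sin A * sin B * cos C
      = (cos (A - B + C) + cos (A - B - C) - cos (A + B + C) - cos (A + B - C)) / 4 := by
  simp only [cos_add, cos_sub, sin_add, sin_sub]; ring

theorem Complex.cos_mul_sin_mul_sin (A B C : ℂ) :
    cos A * sin B * sin C
      = (cos (A - B + C) + cos (A + B - C) - cos (A - B - C) - cos (A + B + C)) / 4 := by
  simp only [cos_add, cos_sub, sin_add, sin_sub]; ring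

section SinConvolution

variable {ρ : ℂ} {g : ℝ → ℂ}

theorem hasDerivAt_sin_mul_div (hρ : ρ ≠ 0) (x : ℝ) :
    HasDerivAt (fun y : ℝ => Complex.sin (ρ * y) / ρ) (Complex.cos (ρ * x)) x := by
  have hlin : HasDerivAt (fun y : ℝ => ρ * (y : ℂ)) ρ x := by
    simpa using ((hasDerivAt_id (x : ℂ)).const_mul ρ).comp_ofReal
  simpa [hρ] using ((Complex.hasDerivAt_sin _).comp x hlin).div_const ρ

theorem hasDerivAt_cos_mul_div (hρ : ρ ≠ 0) (x : ℝ) :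
    HasDerivAt (fun y : ℝ => Complex.cos (ρ * y) / ρ) (-Complex.sin (ρ * x)) x := by
  have hlin : HasDerivAt (fun y : ℝ => ρ * (y : ℂ)) ρ x := by
    simpa using ((hasDerivAt_id (x : ℂ)).const_mul ρ).comp_ofReal
  simpa [hρ, neg_div] using ((Complex.hasDerivAt_cos _).comp x hlin).div_const ρ

theorem intervalIntegral_sin_sub_mul (hg : LocallyIntegrable g) (c x : ℝ) :
    ∫ t in c..x, Complex.sin (ρ * ((x - t : ℝ) : ℂ)) / ρ * g t
      = Complex.sin (ρ * x) / ρ * (∫ t in c..x, Complex.cos (ρ * t) * g t)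
        - Complex.cos (ρ * x) / ρ * ∫ t in c..x, Complex.sin (ρ * t) * g t := by
  have hcos := (hg.continuous_mul (g := fun t : ℝ => Complex.cos (ρ * t)) (by fun_prop))
    |>.intervalIntegrable c x
  have hsin := (hg.continuous_mul (g := fun t : ℝ => Complex.sin (ρ * t)) (by fun_prop))
    |>.intervalIntegrable c x
  rw [← intervalIntegral.integral_const_mul,
    ← intervalIntegral.integral_const_mul (Complex.cos _ / ρ),
    ← intervalIntegral.integral_sub (hcos.const_mul _) (hsin.const_mul _)]
  congr 1 with t
  rw [Complex.ofReal_sub, mul_sub, Complex.sin_sub]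
  ring

theorem intervalIntegral_cos_sub_mul (hg : LocallyIntegrable g) (c x : ℝ) :
    ∫ t in c..x, Complex.cos (ρ * ((x - t : ℝ) : ℂ)) * g t
      = Complex.cos (ρ * x) * (∫ t in c..x, Complex.cos (ρ * t) * g t)
        + Complex.sin (ρ * x) * ∫ t in c..x, Complex.sin (ρ * t) * g t := by
  have hcos := (hg.continuous_mul (g := fun t : ℝ => Complex.cos (ρ * t)) (by fun_prop))
    |>.intervalIntegrable c x
  have hsin := (hg.continuous_mul (g := fun t : ℝ => Complex.sin (ρ * t)) (by fun_prop))
    |>.intervalIntegrable c x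
  rw [← intervalIntegral.integral_const_mul,
    ← intervalIntegral.integral_const_mul (Complex.sin _),
    ← intervalIntegral.integral_add (hcos.const_mul _) (hsin.const_mul _)]
  congr 1 with t
  rw [Complex.ofReal_sub, mul_sub, Complex.cos_sub]
  ring

theorem continuous_intervalIntegral_sin_sub_mul (hg : LocallyIntegrable g) (c : ℝ) :
    Continuous fun x : ℝ => ∫ t in c..x, Complex.sin (ρ * ((x - t : ℝ) : ℂ)) / ρ * g t := by
  simp_rw [intervalIntegral_sin_sub_mul hg c]
  have hcos : Continuous fun x => ∫ t in c..x, Complex.cos (ρ * t) * g t :=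
    intervalIntegral.continuous_primitive ((hg.continuous_mul (by fun_prop)).intervalIntegrable) c
  have hsin : Continuous fun x => ∫ t in c..x, Complex.sin (ρ * t) * g t :=
    intervalIntegral.continuous_primitive ((hg.continuous_mul (by fun_prop)).intervalIntegrable) c
  fun_prop

theorem hasDerivAt_intervalIntegral_sin_sub_mul (hρ : ρ ≠ 0) (hg : LocallyIntegrable g) (c : ℝ)
    {x : ℝ} (hgx : ContinuousAt g x) :
    HasDerivAt (fun y : ℝ => ∫ t in c..y, Complex.sin (ρ * ((y - t : ℝ) : ℂ)) / ρ * g t)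
      (∫ t in c..x, Complex.cos (ρ * ((x - t : ℝ) : ℂ)) * g t) x := by
  have hprim : ∀ F : ℝ → ℂ, Continuous F →
      HasDerivAt (fun y => ∫ t in c..y, F t * g t) (F x * g x) x := fun F hF =>
    intervalIntegral.integral_hasDerivAt_right ((hg.continuous_mul hF).intervalIntegrable c x)
      (hg.continuous_mul hF).aestronglyMeasurable.stronglyMeasurableAtFilter
      (hF.continuousAt.mul hgx)
  simp_rw [intervalIntegral_sin_sub_mul hg c, intervalIntegral_cos_sub_mul hg c]
  -- the two boundary terms `± sin(ρx) cos(ρx) g(x) / ρ` cancel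
  exact ((hasDerivAt_sin_mul_div hρ x).mul (hprim (fun t : ℝ => Complex.cos (ρ * t)) (by fun_prop))
    |>.sub ((hasDerivAt_cos_mul_div hρ x).mul
      (hprim (fun t : ℝ => Complex.sin (ρ * t)) (by fun_prop)))).congr_deriv (by ring)

theorem intervalIntegral_sin_sub_two_mul_add (hρ : ρ ≠ 0) (C a c d : ℝ) :
    ∫ x in c..d, Complex.sin (ρ * ((C - 2 * x + a : ℝ) : ℂ))
      = (Complex.cos (ρ * ((C - 2 * d + a : ℝ) : ℂ)) - Complex.cos (ρ * ((C - 2 * c + a : ℝ) : ℂ)))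
        / (2 * ρ) := by
  have hderiv : ∀ x : ℝ, HasDerivAt
      (fun x : ℝ => Complex.cos (ρ * ((C - 2 * x + a : ℝ) : ℂ)) / (2 * ρ))
      (Complex.sin (ρ * ((C - 2 * x + a : ℝ) : ℂ))) x := by
    intro x
    have hlin : HasDerivAt (fun y : ℝ => ρ * ((C - 2 * y + a : ℝ) : ℂ)) (ρ * (-2 : ℝ)) x :=
      ((((hasDerivAt_id x).const_mul 2).const_sub C).add_const a).ofReal_comp.const_mul ρ
        |>.congr_deriv (by simp)
    refine (((Complex.hasDerivAt_cos _).comp x hlin).div_const (2 * ρ)).congr_deriv ?_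
    push_cast
    field_simp
  rw [intervalIntegral.integral_eq_sub_of_hasDerivAt (fun x _ => hderiv x)
    ((by fun_prop : Continuous fun x : ℝ =>
      Complex.sin (ρ * ((C - 2 * x + a : ℝ) : ℂ))).intervalIntegrable _ _)]
  ring

end SinConvolution

theorem integrableOn_sin_sub_two_mul_add (ρ : ℂ) (C a c d : ℝ) :
    IntegrableOn (fun x : ℝ => Complex.sin (ρ * ((C - 2 * x + a : ℝ) : ℂ))) (Ioo c d) :=
  (by fun_prop : Continuous fun x : ℝ => Complex.sin (ρ * ((C - 2 * x + a : ℝ) : ℂ)))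
    |>.integrableOn_Icc.mono_set Ioo_subset_Icc_self

theorem integrable_mul_sin_sub_two_mul_add {q : ℝ → ℂ} {b c : ℝ} (hq : Integrable q)
    (hsupp : Function.support q ⊆ Ioo b c) (ρ : ℂ) (C a : ℝ) :
    Integrable fun x => q x * Complex.sin (ρ * ((C - 2 * x + a : ℝ) : ℂ)) := by
  simpa only [mul_comm] using hq.continuous_mul_of_support_subset isCompact_Icc
    (by fun_prop : Continuous fun x : ℝ => Complex.sin (ρ * ((C - 2 * x + a : ℝ) : ℂ)))
    (hsupp.trans Ioo_subset_Icc_self)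

theorem ae_eq_indicator_Ioo {E : Type*} [Zero E] {q : ℝ → E} {a b c : ℝ}
    (hq0 : ∀ x ∉ Ioo a c, q x = 0) (hqc : ∀ᵐ x ∂(volume.restrict (Ioo b c)), q x = 0) :
    q =ᵐ[volume] (Ioo a b).indicator q := by
  filter_upwards [(ae_restrict_iff' measurableSet_Ioo).1 hqc, Measure.ae_ne volume b]
    with x hxc hxb
  by_cases hab : x ∈ Ioo a b
  · rw [indicator_of_mem hab]
  · rw [indicator_of_notMem hab]
    by_cases hac : x ∈ Ioo a c
    · exact hxc ⟨lt_of_le_of_ne (not_lt.1 fun h => hab ⟨hac.1, h⟩) hxb.symm, hac.2⟩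
    · exact hq0 x hac

section CongrAE

variable {a : ℝ} {q q' : ℝ → ℂ} {ρ : ℂ}

theorem ySeq_congr_ae (h : q =ᵐ[volume] q') (ν k : ℕ) : ySeq a q ρ ν k = ySeq a q' ρ ν k := by
  induction k with
  | zero => rfl
  | succ k ih =>
    funext x
    refine intervalIntegral.integral_congr_ae (h.mono fun t ht _ => ?_)
    rw [ht, ih]

theorem Yfun_congr_ae (h : q =ᵐ[volume] q') (ν : ℕ) : Yfun a q ρ ν = Yfun a q' ρ ν := by
  funext x
  simp only [Yfun, ySeq_congr_ae h]

theorem Qfun_congr_ae (h : q =ᵐ[volume] q') (ν : ℕ) : Qfun a q ν = Qfun a q' ν := by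
  have hmul : ∀ (F : ℝ → ℂ) (c d : ℝ), ∫ t in c..d, q t * F t = ∫ t in c..d, q' t * F t :=
    fun F c d => intervalIntegral.integral_congr_ae (h.mono fun t ht _ => by rw [ht])
  have hone : ∀ c d : ℝ, ∫ t in c..d, q t = ∫ t in c..d, q' t :=
    fun c d => intervalIntegral.integral_congr_ae (h.mono fun t ht _ => ht)
  funext x
  simp only [Qfun, hone, hmul]

theorem wfun_ae_eq (h : q =ᵐ[volume] q') (ν : ℕ) : wfun a q ν =ᵐ[volume] wfun a q' ν :=
  h.mono fun x hx => by simp only [wfun, hx, Qfun_congr_ae h]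

end CongrAE

theorem continuous_y0 (ρ : ℂ) (ν : ℕ) : Continuous (y0 ρ ν) := by
  unfold y0
  split_ifs <;> fun_prop

section Solution

variable {a : ℝ} {q : ℝ → ℂ} {ρ : ℂ}

theorem ySeq_zero (ν : ℕ) : ySeq a q ρ ν 0 = y0 ρ ν := rfl

theorem ySeq_succ_apply (ν k : ℕ) (x : ℝ) :
    ySeq a q ρ ν (k + 1) x
      = ∫ t in a..x, Complex.sin (ρ * ((x - t : ℝ) : ℂ)) / ρ * (q t * ySeq a q ρ ν k (t - a)) := by
  simp only [ySeq, mul_assoc]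

theorem continuous_ySeq_one (hq : LocallyIntegrable q) (ν : ℕ) :
    Continuous (ySeq a q ρ ν 1) := by
  simp_rw [funext (ySeq_succ_apply (a := a) (q := q) (ρ := ρ) ν 0)]
  exact continuous_intervalIntegral_sin_sub_mul
    (hq.mul_continuous ((continuous_y0 ρ ν).comp (continuous_sub_right a))) a

theorem hasDerivAt_Yfun_one (hρ : ρ ≠ 0) (hq : LocallyIntegrable q) {x : ℝ}
    (hqx : ContinuousAt q x) :
    HasDerivAt (Yfun a q ρ 1)
      (Complex.cos (ρ * x)
        + (∫ t in a..x, Complex.cos (ρ * ((x - t : ℝ) : ℂ)) * (q t * y0 ρ 1 (t - a)))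
        + ∫ t in a..x, Complex.cos (ρ * ((x - t : ℝ) : ℂ)) * (q t * ySeq a q ρ 1 1 (t - a))) x := by
  have hterm : ∀ F : ℝ → ℂ, Continuous F →
      HasDerivAt (fun y : ℝ => ∫ t in a..y, Complex.sin (ρ * ((y - t : ℝ) : ℂ)) / ρ * (q t * F t))
        (∫ t in a..x, Complex.cos (ρ * ((x - t : ℝ) : ℂ)) * (q t * F t)) x := fun F hF =>
    hasDerivAt_intervalIntegral_sin_sub_mul hρ (hq.mul_continuous hF) a (hqx.mul hF.continuousAt)
  have hY : Yfun a q ρ 1 = fun y : ℝ => Complex.sin (ρ * y) / ρ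
      + (∫ t in a..y, Complex.sin (ρ * ((y - t : ℝ) : ℂ)) / ρ * (q t * y0 ρ 1 (t - a)))
      + ∫ t in a..y, Complex.sin (ρ * ((y - t : ℝ) : ℂ)) / ρ * (q t * ySeq a q ρ 1 1 (t - a)) := by
    funext y
    simp only [Yfun, ySeq_succ_apply]
    rfl
  rw [hY]
  exact ((hasDerivAt_sin_mul_div hρ x).add
    (hterm _ ((continuous_y0 ρ 1).comp (continuous_sub_right a)))).add
    (hterm _ ((continuous_ySeq_one hq 1).comp (continuous_sub_right a)))

end Solution

noncomputable def triangleIntegral (a : ℝ) (q : ℝ → ℂ) (F : ℝ × ℝ → ℂ) : ℂ :=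
  ∫ p : ℝ × ℝ, {p : ℝ × ℝ | p.2 < p.1 - a}.indicator (fun p => F p * (q p.1 * q p.2)) p

section Triangle

variable {a b : ℝ} {q : ℝ → ℂ} {ρ : ℂ}

theorem measurableSet_triangle (a : ℝ) : MeasurableSet {p : ℝ × ℝ | p.2 < p.1 - a} :=
  measurableSet_lt measurable_snd (measurable_fst.sub_const a)

theorem support_mul_prod_subset (hsupp : Function.support q ⊆ Ioo a b) :
    (Function.support fun p : ℝ × ℝ => q p.1 * q p.2) ⊆ Ioo a b ×ˢ Ioo a b :=
  fun _ hp => ⟨hsupp (left_ne_zero_of_mul hp), hsupp (right_ne_zero_of_mul hp)⟩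

theorem integrable_triangle (hq : Integrable q) (hsupp : Function.support q ⊆ Ioo a b)
    {F : ℝ × ℝ → ℂ} (hF : Continuous F) :
    Integrable ({p : ℝ × ℝ | p.2 < p.1 - a}.indicator fun p => F p * (q p.1 * q p.2)) :=
  ((hq.mul_prod hq).continuous_mul_of_support_subset (isCompact_Icc.prod isCompact_Icc) hF
    ((support_mul_prod_subset hsupp).trans
      (prod_mono Ioo_subset_Icc_self Ioo_subset_Icc_self))).indicator (measurableSet_triangle a)

theorem triangleIntegral_add (hq : Integrable q) (hsupp : Function.support q ⊆ Ioo a b)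
    {F G : ℝ × ℝ → ℂ} (hF : Continuous F) (hG : Continuous G) :
    triangleIntegral a q (F + G) = triangleIntegral a q F + triangleIntegral a q G := by
  rw [triangleIntegral, triangleIntegral, triangleIntegral, ← integral_add
    (integrable_triangle hq hsupp hF) (integrable_triangle hq hsupp hG)]
  congr 1 with p
  simp only [indicator_apply, Pi.add_apply]
  split_ifs <;> ring

theorem triangleIntegral_sub (hq : Integrable q) (hsupp : Function.support q ⊆ Ioo a b)
    {F G : ℝ × ℝ → ℂ} (hF : Continuous F) (hG : Continuous G) :
    triangleIntegral a q (F - G) = triangleIntegral a q F - triangleIntegral a q G := by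
  rw [triangleIntegral, triangleIntegral, triangleIntegral, ← integral_sub
    (integrable_triangle hq hsupp hF) (integrable_triangle hq hsupp hG)]
  congr 1 with p
  simp only [indicator_apply, Pi.sub_apply]
  split_ifs <;> ring

theorem triangleIntegral_const_mul (c : ℂ) (F : ℝ × ℝ → ℂ) :
    triangleIntegral a q (fun p => c * F p) = c * triangleIntegral a q F := by
  rw [triangleIntegral, triangleIntegral, ← integral_const_mul]
  congr 1 with p
  rw [← indicator_const_mul]
  simp only [mul_assoc]

theorem intervalIntegral_mul_ySeq_one (hq : Integrable q) (hsupp : Function.support q ⊆ Ioo a b)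
    {κ : ℝ → ℂ} (hκ : Continuous κ) (ν : ℕ) {x : ℝ} (hbx : b ≤ x) :
    ∫ t in a..x, κ t * (q t * ySeq a q ρ ν 1 (t - a))
      = triangleIntegral a q fun p =>
          κ p.1 * (Complex.sin (ρ * ((p.1 - a - p.2 : ℝ) : ℂ)) / ρ) * y0 ρ ν (p.2 - a) := by
  have hq0 := Function.support_subset_iff'.1 hsupp
  have hinner : ∀ t, κ t * (q t * ySeq a q ρ ν 1 (t - a))
      = ∫ s, {p : ℝ × ℝ | p.2 < p.1 - a}.indicator (fun p =>
          κ p.1 * (Complex.sin (ρ * ((p.1 - a - p.2 : ℝ) : ℂ)) / ρ) * y0 ρ ν (p.2 - a)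
            * (q p.1 * q p.2)) (t, s) := by
    intro t
    rw [ySeq_succ_apply, intervalIntegral_eq_setIntegral_Iio
      (fun s hs => by rw [hq0 s fun h => (h.1.trans_le hs).false, zero_mul, mul_zero]),
      ← integral_indicator measurableSet_Iio, ← integral_const_mul, ← integral_const_mul]
    congr 1 with s
    simp only [indicator_apply, mem_ofPred_eq, mem_Iio, ySeq_zero]
    split_ifs <;> ring
  rw [intervalIntegral_eq_integral_of_support_subset
      ((Function.support_mul_subset_right _ _).trans
        ((Function.support_mul_subset_left _ _).trans hsupp)) hbx]
  simp_rw [hinner]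
  exact integral_integral (integrable_triangle hq hsupp (by
    have := continuous_y0 ρ ν
    fun_prop))

end Triangle

noncomputable def kernelA (a : ℝ) (ρ : ℂ) (p : ℝ × ℝ) : ℂ :=
  Complex.cos (ρ * ((π - 2 * p.1 + 2 * a : ℝ) : ℂ)) - Complex.cos (ρ * ((π - 2 * p.2 : ℝ) : ℂ))

noncomputable def kernelB (a : ℝ) (ρ : ℂ) (p : ℝ × ℝ) : ℂ :=
  Complex.cos (ρ * ((π - 2 * p.1 + 2 * p.2 : ℝ) : ℂ)) - Complex.cos (ρ * ((π - 2 * a : ℝ) : ℂ))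

/- `(x, (t, s)) ∈ regionA a` (resp. `(x, (τ, t)) ∈ regionB a`) says that the pair of integration
variables lies in the domain of the first (resp. second) term of `Qfun a q ν x`; the larger variable
comes first, as in `triangleIntegral`. -/
def regionA (a : ℝ) : Set (ℝ × ℝ × ℝ) := {z | z.1 + a / 2 < z.2.1 ∧ z.2.2 < z.1 - a / 2}

def regionB (a : ℝ) : Set (ℝ × ℝ × ℝ) :=
  {z | z.2.2 < 7 * a / 2 - z.1 ∧ z.1 + z.2.2 - a / 2 < z.2.1}

section QTerms

variable {a : ℝ} {q : ℝ → ℂ} {ρ : ℂ}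

theorem measurableSet_regionA (a : ℝ) : MeasurableSet (regionA a) := by
  unfold regionA; measurability

theorem measurableSet_regionB (a : ℝ) : MeasurableSet (regionB a) := by
  unfold regionB; measurability

theorem Qfun_first_term_eq (hsupp : Function.support q ⊆ Ioo a (3 * a)) (x : ℝ) :
    (∫ t in (x + a / 2)..(3 * a), q t) * (∫ τ in a..(x - a / 2), q τ)
      = ∫ p : ℝ × ℝ, (regionA a).indicator 1 (x, p) * (q p.1 * q p.2) := by
  have hq0 := Function.support_subset_iff'.1 hsupp
  rw [intervalIntegral_eq_setIntegral_Ioi (fun t ht => hq0 t fun h => (h.2.trans_le ht).false),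
    intervalIntegral_eq_setIntegral_Iio (fun t ht => hq0 t fun h => (h.1.trans_le ht).false),
    ← integral_indicator measurableSet_Ioi, ← integral_indicator measurableSet_Iio,
    ← integral_prod_mul]
  congr 1 with p
  by_cases h1 : x + a / 2 < p.1 <;> by_cases h2 : p.2 < x - a / 2 <;>
    simp [regionA, h1, h2]

theorem Qfun_second_term_eq (hq : Integrable q) (hsupp : Function.support q ⊆ Ioo a (3 * a))
    (x : ℝ) :
    ∫ t in a..(7 * a / 2 - x), q t * (∫ τ in (x + t - a / 2)..(3 * a), q τ)
      = ∫ p : ℝ × ℝ, (regionB a).indicator 1 (x, p) * (q p.1 * q p.2) := by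
  have hq0 := Function.support_subset_iff'.1 hsupp
  have hG : Integrable (fun p : ℝ × ℝ => (regionB a).indicator 1 (x, p) * (q p.1 * q p.2)) :=
    integrable_indicator_one_mul (measurableSet_regionB a) (hq.mul_prod hq) x
  have hinner : ∀ t, (Iio (7 * a / 2 - x)).indicator
      (fun t => q t * ∫ τ in (x + t - a / 2)..(3 * a), q τ) t
        = ∫ τ, (regionB a).indicator 1 (x, (τ, t)) * (q τ * q t) := by
    intro t
    by_cases ht : t < 7 * a / 2 - x
    · rw [indicator_of_mem (mem_Iio.2 ht),
        intervalIntegral_eq_setIntegral_Ioi (fun τ hτ => hq0 τ fun h => (h.2.trans_le hτ).false),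
        ← integral_indicator measurableSet_Ioi, ← integral_const_mul]
      congr 1 with τ
      by_cases hτ : x + t - a / 2 < τ
      · rw [indicator_of_mem (mem_Ioi.2 hτ),
          indicator_of_mem (show (x, (τ, t)) ∈ regionB a from ⟨ht, hτ⟩), Pi.one_apply]
        ring
      · rw [indicator_of_notMem (mt mem_Ioi.1 hτ), indicator_of_notMem fun h => hτ h.2]
        ring
    · rw [indicator_of_notMem (mt mem_Iio.1 ht)]
      simp [regionB, ht]
  rw [intervalIntegral_eq_setIntegral_Iio
      (fun t ht => by rw [hq0 t fun h => (h.1.trans_le ht).false, zero_mul]),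
    ← integral_indicator measurableSet_Iio]
  simp_rw [hinner]
  rw [integral_integral (f := fun t τ => (regionB a).indicator 1 (x, (τ, t)) * (q τ * q t))
    hG.swap]
  exact integral_prod_swap (fun p : ℝ × ℝ => (regionB a).indicator 1 (x, p) * (q p.1 * q p.2))

theorem setIntegral_regionA_mul_sin (hρ : ρ ≠ 0) {p : ℝ × ℝ}
    (hp : p ∈ Ioo a (3 * a) ×ˢ Ioo a (3 * a)) :
    ∫ x in Ioo (3 * a / 2) (5 * a / 2),
        (regionA a).indicator 1 (x, p) * Complex.sin (ρ * ((π - 2 * x + a : ℝ) : ℂ))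
      = {p : ℝ × ℝ | p.2 < p.1 - a}.indicator (kernelA a ρ) p / (2 * ρ) := by
  obtain ⟨⟨h1, h1'⟩, h2, h2'⟩ := hp
  have hslice : ∀ x ∈ Ioo (3 * a / 2) (5 * a / 2),
      (x, p) ∈ regionA a ↔ x ∈ Ioo (p.2 + a / 2) (p.1 - a / 2) := fun x _ => by
    simp only [regionA, mem_ofPred_eq, mem_Ioo]
    constructor <;> rintro ⟨h, h'⟩ <;> constructor <;> linarith
  rw [setIntegral_indicator_one_mul_of_slice measurableSet_Ioo measurableSet_Ioo
    (Ioo_subset_Ioo (by linarith) (by linarith)) hslice]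
  by_cases hT : p.2 < p.1 - a
  · rw [indicator_of_mem (show p ∈ {p : ℝ × ℝ | p.2 < p.1 - a} from hT),
      ← integral_Ioc_eq_integral_Ioo, ← intervalIntegral.integral_of_le (by linarith),
      intervalIntegral_sin_sub_two_mul_add hρ, kernelA]
    ring_nf
  · rw [indicator_of_notMem (show p ∉ {p : ℝ × ℝ | p.2 < p.1 - a} from hT),
      Ioo_eq_empty (by linarith), Measure.restrict_empty, integral_zero_measure, zero_div]

theorem setIntegral_regionB_mul_sin (hρ : ρ ≠ 0) {p : ℝ × ℝ}
    (hp : p ∈ Ioo a (3 * a) ×ˢ Ioo a (3 * a)) :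
    ∫ x in Ioo (3 * a / 2) (5 * a / 2),
        (regionB a).indicator 1 (x, p) * Complex.sin (ρ * ((π - 2 * x + a : ℝ) : ℂ))
      = {p : ℝ × ℝ | p.2 < p.1 - a}.indicator (kernelB a ρ) p / (2 * ρ) := by
  obtain ⟨⟨h1, h1'⟩, h2, h2'⟩ := hp
  have hslice : ∀ x ∈ Ioo (3 * a / 2) (5 * a / 2),
      (x, p) ∈ regionB a ↔ x ∈ Ioo (3 * a / 2) (p.1 - p.2 + a / 2) := fun x hx => by
    simp only [regionB, mem_ofPred_eq, mem_Ioo]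
    constructor
    · rintro ⟨-, h⟩; exact ⟨hx.1, by linarith⟩
    · rintro ⟨-, h⟩; constructor <;> linarith
  rw [setIntegral_indicator_one_mul_of_slice measurableSet_Ioo measurableSet_Ioo
    (Ioo_subset_Ioo le_rfl (by linarith)) hslice]
  by_cases hT : p.2 < p.1 - a
  · rw [indicator_of_mem (show p ∈ {p : ℝ × ℝ | p.2 < p.1 - a} from hT),
      ← integral_Ioc_eq_integral_Ioo, ← intervalIntegral.integral_of_le (by linarith),
      intervalIntegral_sin_sub_two_mul_add hρ, kernelB]
    ring_nf
  · rw [indicator_of_notMem (show p ∉ {p : ℝ × ℝ | p.2 < p.1 - a} from hT),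
      Ioo_eq_empty (by linarith), Measure.restrict_empty, integral_zero_measure, zero_div]

theorem setIntegral_integral_region_mul_sin (hq : Integrable q)
    (hsupp : Function.support q ⊆ Ioo a (3 * a)) {R : Set (ℝ × ℝ × ℝ)} (hR : MeasurableSet R)
    {K : ℝ × ℝ → ℂ}
    (hslice : ∀ p ∈ Ioo a (3 * a) ×ˢ Ioo a (3 * a),
      ∫ x in Ioo (3 * a / 2) (5 * a / 2),
          R.indicator 1 (x, p) * Complex.sin (ρ * ((π - 2 * x + a : ℝ) : ℂ))
        = {p : ℝ × ℝ | p.2 < p.1 - a}.indicator K p / (2 * ρ)) :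
    ∫ x in Ioo (3 * a / 2) (5 * a / 2), (∫ p : ℝ × ℝ, R.indicator 1 (x, p) * (q p.1 * q p.2))
        * Complex.sin (ρ * ((π - 2 * x + a : ℝ) : ℂ))
      = triangleIntegral a q K / (2 * ρ) := by
  have hqq : Integrable (fun p : ℝ × ℝ => q p.1 * q p.2) := hq.mul_prod hq
  rw [integral_integral_indicator_mul_swap (integrableOn_sin_sub_two_mul_add ρ π a _ _) hqq hR,
    triangleIntegral, ← integral_div]
  congr 1 with p
  by_cases hp : p ∈ Ioo a (3 * a) ×ˢ Ioo a (3 * a)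
  · rw [hslice p hp]
    by_cases hT : p ∈ {p : ℝ × ℝ | p.2 < p.1 - a}
    · rw [indicator_of_mem hT, indicator_of_mem hT]; ring
    · rw [indicator_of_notMem hT, indicator_of_notMem hT]; ring
  · have hqp : q p.1 * q p.2 = 0 :=
      Function.notMem_support.1 fun h => hp (support_mul_prod_subset hsupp h)
    simp [indicator_apply, hqp]

theorem Qfun_eq (hq : Integrable q) (hsupp : Function.support q ⊆ Ioo a (3 * a)) (ν : ℕ)
    (x : ℝ) :
    Qfun a q ν x = (∫ p : ℝ × ℝ, (regionA a).indicator 1 (x, p) * (q p.1 * q p.2))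
      - (-1) ^ ν * ∫ p : ℝ × ℝ, (regionB a).indicator 1 (x, p) * (q p.1 * q p.2) := by
  rw [Qfun, Qfun_first_term_eq hsupp, Qfun_second_term_eq hq hsupp]

theorem integrableOn_Qfun_mul_sin (hq : Integrable q) (hsupp : Function.support q ⊆ Ioo a (3 * a))
    (ν : ℕ) :
    IntegrableOn (fun x => Qfun a q ν x * Complex.sin (ρ * ((π - 2 * x + a : ℝ) : ℂ)))
      (Ioo (3 * a / 2) (5 * a / 2)) := by
  have hsin := integrableOn_sin_sub_two_mul_add ρ π a (3 * a / 2) (5 * a / 2)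
  have hqq : Integrable (fun p : ℝ × ℝ => q p.1 * q p.2) := hq.mul_prod hq
  simp_rw [Qfun_eq hq hsupp, sub_mul, mul_assoc]
  exact (integrable_integral_indicator_mul hsin hqq (measurableSet_regionA a)).sub
    ((integrable_integral_indicator_mul hsin hqq (measurableSet_regionB a)).const_mul _)

theorem setIntegral_Qfun_mul_sin (hρ : ρ ≠ 0) (hq : Integrable q)
    (hsupp : Function.support q ⊆ Ioo a (3 * a)) (ν : ℕ) :
    ∫ x in Ioo (3 * a / 2) (5 * a / 2), Qfun a q ν x * Complex.sin (ρ * ((π - 2 * x + a : ℝ) : ℂ))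
      = (triangleIntegral a q (kernelA a ρ) - (-1) ^ ν * triangleIntegral a q (kernelB a ρ))
        / (2 * ρ) := by
  have hsin := integrableOn_sin_sub_two_mul_add ρ π a (3 * a / 2) (5 * a / 2)
  have hqq : Integrable (fun p : ℝ × ℝ => q p.1 * q p.2) := hq.mul_prod hq
  simp_rw [Qfun_eq hq hsupp, sub_mul, mul_assoc]
  rw [integral_sub (integrable_integral_indicator_mul hsin hqq (measurableSet_regionA a))
      ((integrable_integral_indicator_mul hsin hqq (measurableSet_regionB a)).const_mul _),
    integral_const_mul,
    setIntegral_integral_region_mul_sin hq hsupp (measurableSet_regionA a)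
      fun p hp => setIntegral_regionA_mul_sin hρ hp,
    setIntegral_integral_region_mul_sin hq hsupp (measurableSet_regionB a)
      fun p hp => setIntegral_regionB_mul_sin hρ hp]
  ring

end QTerms

section Assembly

variable {a : ℝ} {q : ℝ → ℂ} {ρ : ℂ}

theorem intervalIntegral_wfun_mul_sin (ha : 0 < a) (hq : Integrable q)
    (hsupp : Function.support q ⊆ Ioo a (3 * a)) (ν : ℕ) :
    ∫ x in a..(3 * a), wfun a q ν x * Complex.sin (ρ * ((π - 2 * x + a : ℝ) : ℂ))
      = (∫ x in a..(3 * a), q x * Complex.sin (ρ * ((π - 2 * x + a : ℝ) : ℂ)))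
        + ∫ x in Ioo (3 * a / 2) (5 * a / 2),
            Qfun a q ν x * Complex.sin (ρ * ((π - 2 * x + a : ℝ) : ℂ)) := by
  have hsplit : ∀ x, wfun a q ν x * Complex.sin (ρ * ((π - 2 * x + a : ℝ) : ℂ))
      = q x * Complex.sin (ρ * ((π - 2 * x + a : ℝ) : ℂ))
        + (Ioo (3 * a / 2) (5 * a / 2)).indicator
            (fun x => Qfun a q ν x * Complex.sin (ρ * ((π - 2 * x + a : ℝ) : ℂ))) x := by
    intro x
    by_cases hx : x ∈ Ioo (3 * a / 2) (5 * a / 2)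
    · rw [wfun, if_pos hx, indicator_of_mem hx]; ring
    · rw [wfun, if_neg hx, indicator_of_notMem hx, add_zero]
  have hqsin := integrable_mul_sin_sub_two_mul_add hq hsupp ρ π a
  have hI : Ioo (3 * a / 2) (5 * a / 2) ⊆ Ioc a (3 * a) :=
    fun x hx => ⟨by linarith [hx.1], by linarith [hx.2]⟩
  simp_rw [hsplit]
  have hQ := (integrableOn_Qfun_mul_sin (ρ := ρ) hq hsupp ν).integrable_indicator measurableSet_Ioo
  rw [intervalIntegral.integral_add hqsin.intervalIntegrable hQ.intervalIntegrable,
    intervalIntegral.integral_of_le (by linarith) (f := (Ioo _ _).indicator _),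
    setIntegral_indicator measurableSet_Ioo, inter_eq_right.2 hI]

theorem intervalIntegral_mul_of_eq_sin_add_sin (hq : Integrable q)
    (hsupp : Function.support q ⊆ Ioo a (3 * a)) (hπ : 3 * a ≤ π) {κ φ : ℝ → ℂ} (c : ℂ)
    (hκφ : ∀ t, κ t * φ t = (Complex.sin (ρ * ((π - a : ℝ) : ℂ))
      + c * Complex.sin (ρ * ((π - 2 * t + a : ℝ) : ℂ))) / (2 * ρ)) :
    ∫ t in a..π, κ t * (q t * φ t)
      = (∫ t in a..π, q t) * Complex.sin (ρ * ((π - a : ℝ) : ℂ)) / (2 * ρ)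
        + c / (2 * ρ) * ∫ x in a..(3 * a), q x * Complex.sin (ρ * ((π - 2 * x + a : ℝ) : ℂ)) := by
  have hqsin := integrable_mul_sin_sub_two_mul_add hq hsupp ρ π a
  have hsplit : ∀ t, κ t * (q t * φ t) = Complex.sin (ρ * ((π - a : ℝ) : ℂ)) / (2 * ρ) * q t
      + c / (2 * ρ) * (q t * Complex.sin (ρ * ((π - 2 * t + a : ℝ) : ℂ))) := by
    intro t; rw [mul_left_comm, hκφ]; ring
  have htail : ∫ x in a..π, q x * Complex.sin (ρ * ((π - 2 * x + a : ℝ) : ℂ))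
      = ∫ x in a..(3 * a), q x * Complex.sin (ρ * ((π - 2 * x + a : ℝ) : ℂ)) := by
    have hsupp' := (Function.support_mul_subset_left q
      fun x : ℝ => Complex.sin (ρ * ((π - 2 * x + a : ℝ) : ℂ))).trans hsupp
    rw [intervalIntegral_eq_integral_of_support_subset hsupp' hπ,
      intervalIntegral_eq_integral_of_support_subset hsupp' le_rfl]
  simp_rw [hsplit]
  rw [intervalIntegral.integral_add ((hq.intervalIntegrable).const_mul _)
      (hqsin.intervalIntegrable.const_mul _), intervalIntegral.integral_const_mul,
    intervalIntegral.integral_const_mul, htail]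
  ring

theorem sin_div_mul_y0_zero (hρ : ρ ≠ 0) (t : ℝ) :
    Complex.sin (ρ * ((π - t : ℝ) : ℂ)) / ρ * y0 ρ 0 (t - a)
      = (Complex.sin (ρ * ((π - a : ℝ) : ℂ)) + Complex.sin (ρ * ((π - 2 * t + a : ℝ) : ℂ)))
        / (2 * ρ) := by
  rw [y0, if_pos rfl, div_mul_eq_mul_div, Complex.sin_mul_cos]
  push_cast
  field_simp
  ring_nf

theorem cos_mul_y0_one (hρ : ρ ≠ 0) (t : ℝ) :
    Complex.cos (ρ * ((π - t : ℝ) : ℂ)) * y0 ρ 1 (t - a)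
      = (Complex.sin (ρ * ((π - a : ℝ) : ℂ)) - Complex.sin (ρ * ((π - 2 * t + a : ℝ) : ℂ)))
        / (2 * ρ) := by
  rw [y0, if_neg one_ne_zero, mul_div_assoc', Complex.cos_mul_sin]
  push_cast
  field_simp
  ring_nf

theorem sin_div_mul_sin_div_mul_y0_zero (hρ : ρ ≠ 0) (p : ℝ × ℝ) :
    Complex.sin (ρ * ((π - p.1 : ℝ) : ℂ)) / ρ * (Complex.sin (ρ * ((p.1 - a - p.2 : ℝ) : ℂ)) / ρ)
        * y0 ρ 0 (p.2 - a)
      = 1 / (4 * ρ ^ 2) * (kernelA a ρ + kernelB a ρ) p := by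
  rw [y0, if_pos rfl,
    show ∀ X Y Z : ℂ, X / ρ * (Y / ρ) * Z = X * Y * Z / ρ ^ 2 from fun _ _ _ => by ring,
    Complex.sin_mul_sin_mul_cos, Pi.add_apply, kernelA, kernelB]
  push_cast
  field_simp
  ring_nf

theorem cos_mul_sin_div_mul_y0_one (hρ : ρ ≠ 0) (p : ℝ × ℝ) :
    Complex.cos (ρ * ((π - p.1 : ℝ) : ℂ)) * (Complex.sin (ρ * ((p.1 - a - p.2 : ℝ) : ℂ)) / ρ)
        * y0 ρ 1 (p.2 - a)
      = 1 / (4 * ρ ^ 2) * (kernelB a ρ - kernelA a ρ) p := by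
  rw [y0, if_neg one_ne_zero,
    show ∀ X Y Z : ℂ, X * (Y / ρ) * (Z / ρ) = X * Y * Z / ρ ^ 2 from fun _ _ _ => by ring,
    Complex.cos_mul_sin_mul_sin, Pi.sub_apply, kernelA, kernelB]
  push_cast
  field_simp
  ring_nf

theorem continuous_kernelA (a : ℝ) (ρ : ℂ) : Continuous (kernelA a ρ) := by
  unfold kernelA; fun_prop

theorem continuous_kernelB (a : ℝ) (ρ : ℂ) : Continuous (kernelB a ρ) := by
  unfold kernelB; fun_prop

theorem Yfun_zero_eq (ha : 0 < a) (hπ : 3 * a ≤ π) (hρ : ρ ≠ 0) (hq : Integrable q)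
    (hsupp : Function.support q ⊆ Ioo a (3 * a)) :
    Yfun a q ρ 0 π
      = Complex.cos (ρ * (π : ℂ))
        + (∫ t in a..π, q t) * Complex.sin (ρ * ((π - a : ℝ) : ℂ)) / (2 * ρ)
        + 1 / (2 * ρ) *
            ∫ x in a..(3 * a), wfun a q 1 x * Complex.sin (ρ * ((π - 2 * x + a : ℝ) : ℂ)) := by
  have hfirst := intervalIntegral_mul_of_eq_sin_add_sin (ρ := ρ) hq hsupp hπ
    (κ := fun t => Complex.sin (ρ * ((π - t : ℝ) : ℂ)) / ρ) 1 fun t => by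
      rw [one_mul, sin_div_mul_y0_zero hρ]
  have hsecond := intervalIntegral_mul_ySeq_one (ρ := ρ) hq hsupp
    (κ := fun t => Complex.sin (ρ * ((π - t : ℝ) : ℂ)) / ρ) (by fun_prop) 0 hπ
  simp only [sin_div_mul_sin_div_mul_y0_zero hρ, triangleIntegral_const_mul,
    triangleIntegral_add hq hsupp (continuous_kernelA a ρ) (continuous_kernelB a ρ)] at hsecond
  rw [Yfun, ySeq_zero, ySeq_succ_apply, ySeq_succ_apply, ySeq_zero, hfirst, hsecond,
    intervalIntegral_wfun_mul_sin ha hq hsupp, setIntegral_Qfun_mul_sin hρ hq hsupp, y0,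
    if_pos rfl]
  field_simp
  ring

theorem deriv_Yfun_one_eq (ha : 0 < a) (hπ : 3 * a < π) (hρ : ρ ≠ 0) (hq : Integrable q)
    (hsupp : Function.support q ⊆ Ioo a (3 * a)) :
    deriv (Yfun a q ρ 1) π
      = Complex.cos (ρ * (π : ℂ))
        + (∫ t in a..π, q t) * Complex.sin (ρ * ((π - a : ℝ) : ℂ)) / (2 * ρ)
        - 1 / (2 * ρ) *
            ∫ x in a..(3 * a), wfun a q 0 x * Complex.sin (ρ * ((π - 2 * x + a : ℝ) : ℂ)) := by
  have hqπ : ContinuousAt q π := continuousAt_const.congr <|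
    (eventually_gt_nhds hπ).mono fun x hx =>
      (Function.support_subset_iff'.1 hsupp x fun h => (h.2.trans hx).false).symm
  have hfirst := intervalIntegral_mul_of_eq_sin_add_sin (ρ := ρ) hq hsupp hπ.le
    (κ := fun t => Complex.cos (ρ * ((π - t : ℝ) : ℂ))) (-1) fun t => by
      rw [neg_one_mul, ← sub_eq_add_neg, cos_mul_y0_one hρ]
  have hsecond := intervalIntegral_mul_ySeq_one (ρ := ρ) hq hsupp
    (κ := fun t => Complex.cos (ρ * ((π - t : ℝ) : ℂ))) (by fun_prop) 1 hπ.le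
  simp only [cos_mul_sin_div_mul_y0_one hρ, triangleIntegral_const_mul,
    triangleIntegral_sub hq hsupp (continuous_kernelB a ρ) (continuous_kernelA a ρ)] at hsecond
  rw [(hasDerivAt_Yfun_one hρ hq.locallyIntegrable hqπ).deriv, hfirst, hsecond,
    intervalIntegral_wfun_mul_sin ha hq hsupp, setIntegral_Qfun_mul_sin hρ hq hsupp]
  field_simp
  ring

end Assembly

theorem statement11_general
    (a : ℝ) (ha : a ∈ Set.Ioo 0 (π / 3))
    (q : ℝ → ℂ)
    (hq2 : MemLp q 2 (volume.restrict (Set.Ioo 0 π)))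
    (hq0 : ∀ x : ℝ, x ∉ Set.Ioo a π → q x = 0)
    (hq3 : ∀ᵐ x ∂(volume.restrict (Set.Ioo (3 * a) π)), q x = 0)
    (ρ : ℂ) (hρ : ρ ≠ 0) :
    ∀ ν : ℕ, (ν = 0 ∨ ν = 1) → ∀ j : ℕ, j = 1 - ν →
      (if ν = 0 then deriv (fun x => Yfun a q ρ 1 x) π else Yfun a q ρ 0 π)
        = Complex.cos (ρ * (π : ℂ))
          + (∫ t in a..π, q t) * Complex.sin (ρ * ((π - a : ℝ) : ℂ)) / (2 * ρ)
          + ((-1) ^ j / (2 * ρ)) *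
              ∫ x in a..(3 * a),
                wfun a q ν x * Complex.sin (ρ * ((π - 2 * x + a : ℝ) : ℂ)) := by
  obtain ⟨ha0, haπ⟩ := ha
  have h3a : 3 * a < π := by linarith
  set q' := (Ioo a (3 * a)).indicator q
  have hq' : Integrable q' := by
    have : IsFiniteMeasure (volume.restrict (Ioo 0 π)) :=
      isFiniteMeasure_restrict.2 measure_Ioo_lt_top.ne
    exact (IntegrableOn.mono_set (hq2.integrable one_le_two)
      (Ioo_subset_Ioo ha0.le h3a.le)).integrable_indicator measurableSet_Ioo
  have hsupp : Function.support q' ⊆ Ioo a (3 * a) := support_indicator_subset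
  have hqq' : q =ᵐ[volume] q' := ae_eq_indicator_Ioo hq0 hq3
  have hω : ∫ t in a..π, q t = ∫ t in a..π, q' t :=
    intervalIntegral.integral_congr_ae (hqq'.mono fun t ht _ => ht)
  have hw : ∀ ν, ∫ x in a..(3 * a), wfun a q ν x * Complex.sin (ρ * ((π - 2 * x + a : ℝ) : ℂ))
      = ∫ x in a..(3 * a), wfun a q' ν x * Complex.sin (ρ * ((π - 2 * x + a : ℝ) : ℂ)) :=
    fun ν => intervalIntegral.integral_congr_ae ((wfun_ae_eq hqq' ν).mono fun x hx _ => by rw [hx])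
  rintro ν (rfl | rfl) j rfl
  · rw [if_pos rfl, Yfun_congr_ae hqq', hω, hw, deriv_Yfun_one_eq ha0 h3a hρ hq' hsupp]
    ring
  · rw [if_neg one_ne_zero, Yfun_congr_ae hqq', hω, hw, Yfun_zero_eq ha0 h3a.le hρ hq' hsupp]
    ring

theorem statement11
    (a : ℝ) (ha : a ∈ Set.Ioo 0 (π / 3))
    (q : ℝ → ℂ)
    (hq2 : MemLp q 2 (volume.restrict (Set.Ioo 0 π)))
    (hq0 : ∀ x : ℝ, x ∉ Set.Ioo a π → q x = 0)
    (hq3 : ∀ᵐ x ∂(volume.restrict (Set.Ioo (3 * a) π)), q x = 0)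
    (ρ : ℂ) (hρ : ρ ≠ 0) (lam : ℂ) (hlam : lam = ρ ^ 2) :
    ∀ ν : ℕ, (ν = 0 ∨ ν = 1) → ∀ j : ℕ, j = 1 - ν →
      (if ν = 0 then deriv (fun x => Yfun a q ρ 1 x) π else Yfun a q ρ 0 π)
        = Complex.cos (ρ * (π : ℂ))
          + (∫ t in a..π, q t) * Complex.sin (ρ * ((π - a : ℝ) : ℂ)) / (2 * ρ)
          + ((-1) ^ j / (2 * ρ)) *
              ∫ x in a..(3 * a),
                wfun a q ν x * Complex.sin (ρ * ((π - 2 * x + a : ℝ) : ℂ)) :=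
  statement11_general a ha q hq2 hq0 hq3 ρ hρ
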